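/- arXiv:1512.06611 — 4 statements merged into one kernel-verified Lean document; each statement's English description precedes it below -/
import Mathlib

section
/- If {x_n} and {y_n} are sequences in a partial metric space converging symmetrically to x and y respectively, then lim_{n→∞} p(x_n,y_n) = p(x,y). -/
/-! Applying the partial-metric triangle inequality twice along the paths `x → xₙ → yₙ → y` and
`xₙ → x → y → yₙ` traps `p(xₙ, yₙ)` between `p(x, y)` minus and plus quantities that tend to `0`
under symmetric convergence. -/

open Filter Topology

section PartialMetric

variable {X : Type*} {p : X → X → ℝ}

theorem le_add_add_sub_sub_of_triangle (htri : ∀ x y z, p x z ≤ p x y + p y z - p y y)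
    (a b c d : X) : p a d ≤ p a b + p b c + p c d - p b b - p c c := by
  linarith [htri a b d, htri b c d]

theorem sub_sub_le_of_triangle (hsymm : ∀ x y, p x y = p y x)
    (htri : ∀ x y z, p x z ≤ p x y + p y z - p y y) (x y a b : X) :
    p x y - (p a x - p a a) - (p b y - p b b) ≤ p a b := by
  linarith [le_add_add_sub_sub_of_triangle htri x a b y, hsymm x a]

theorem le_add_add_of_triangle (hsymm : ∀ x y, p x y = p y x)
    (htri : ∀ x y z, p x z ≤ p x y + p y z - p y y) (x y a b : X) :
    p a b ≤ p x y + (p a x - p x x) + (p b y - p y y) := by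
  linarith [le_add_add_sub_sub_of_triangle htri a x y b, hsymm y b]

end PartialMetric

theorem stmt_11_general {X : Type*}
    (p : X → X → ℝ)
    (hp2 : ∀ x y, p x y = p y x)
    (hp4 : ∀ x y z, p x z ≤ p x y + p y z - p y y)
    (x y : X) (u v : ℕ → X)
    (hsx : Tendsto (fun n => p (u n) x) atTop (𝓝 (p x x)))
    (hsx' : Tendsto (fun n => p (u n) (u n)) atTop (𝓝 (p x x)))
    (hsy : Tendsto (fun n => p (v n) y) atTop (𝓝 (p y y)))
    (hsy' : Tendsto (fun n => p (v n) (v n)) atTop (𝓝 (p y y))) :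
    Tendsto (fun n => p (u n) (v n)) atTop (𝓝 (p x y)) := by
  have hlo : Tendsto (fun n => p x y - (p (u n) x - p (u n) (u n)) - (p (v n) y - p (v n) (v n)))
      atTop (𝓝 (p x y)) := by
    simpa using (tendsto_const_nhds.sub (hsx.sub hsx')).sub (hsy.sub hsy')
  have hhi : Tendsto (fun n => p x y + (p (u n) x - p x x) + (p (v n) y - p y y))
      atTop (𝓝 (p x y)) := by
    simpa using (tendsto_const_nhds.add (tendsto_sub_nhds_zero_iff.mpr hsx)).add
      (tendsto_sub_nhds_zero_iff.mpr hsy)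
  exact tendsto_of_tendsto_of_tendsto_of_le_of_le hlo hhi
    (fun n => sub_sub_le_of_triangle hp2 hp4 x y (u n) (v n))
    (fun n => le_add_add_of_triangle hp2 hp4 x y (u n) (v n))

theorem stmt_11 {X : Type*}
    (p : X → X → ℝ)
    (hp0 : ∀ x y, 0 ≤ p x y)
    (hp1 : ∀ x y, p x x = p x y → p y y = p x y → x = y)
    (hp2 : ∀ x y, p x y = p y x)
    (hp3 : ∀ x y, p x x ≤ p x y)
    (hp4 : ∀ x y z, p x z ≤ p x y + p y z - p y y)
    (x y : X) (u v : ℕ → X)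
    (hsx : Tendsto (fun n => p (u n) x) atTop (𝓝 (p x x)))
    (hsx' : Tendsto (fun n => p (u n) (u n)) atTop (𝓝 (p x x)))
    (hsy : Tendsto (fun n => p (v n) y) atTop (𝓝 (p y y)))
    (hsy' : Tendsto (fun n => p (v n) (v n)) atTop (𝓝 (p y y))) :
    Tendsto (fun n => p (u n) (v n)) atTop (𝓝 (p x y)) :=
  stmt_11_general p hp2 hp4 x y u v hsx hsx' hsy hsy'
end

section
/- (Caristi–Kirk in partial metric spaces, corrected) Let (X,p) be a complete partial metric space, φ : X → [0,∞) lower semicontinuous (with respect to symmetric convergence), and T : X → X a self-map satisfying p(x,Tx) ≤ φ(x) − φ(Tx) for all x ∈ X. Suppose additionally {x ∈ X : p(x,x) = 0} ≠ ∅. Then T has a fixed point. -/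
/-!
Run a Brøndsted-type descent along the order `a ≼ b ↔ p a b ≤ φ a - φ b`: at step `n` pick
`x (n+1) ≽ x n` whose `φ`-value is within `2⁻ⁿ` of the infimum of `φ` above `x n`. Then
`p (x n) (x m) ≤ φ (x n) - L` with `L = lim φ (x n)`, so the sequence is Cauchy with double limit
`0`, and completeness gives `z` with `p z z = 0`. Lower semicontinuity puts `z`, and hence `T z`,
above every `x n`, and near-minimality forces `φ (T z) ≥ L ≥ φ z`. The Caristi inequality
then gives `p z (T z) = 0`, so `T z = z`.
-/

open Filter Topology

theorem exists_forall_le_add_of_bddBelow {α : Type*} {S : Set α} {f : α → ℝ} (hS : S.Nonempty)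
    (hf : BddBelow (f '' S)) {ε : ℝ} (hε : 0 < ε) : ∃ y ∈ S, ∀ w ∈ S, f y ≤ f w + ε := by
  obtain ⟨_, ⟨y, hy, rfl⟩, hlt⟩ := Real.lt_sInf_add_pos (hS.image f) hε
  exact ⟨y, hy, fun w hw => by linarith [csInf_le hf (Set.mem_image_of_mem f hw)]⟩

theorem exists_seq_forall_rel {α : Type*} [Nonempty α] {R : ℕ → α → α → Prop}
    (h : ∀ n a, ∃ b, R n a b) : ∃ u : ℕ → α, ∀ n, R n (u n) (u (n + 1)) := by
  choose next hnext using h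
  exact ⟨fun n => Nat.rec (Classical.arbitrary α) next n, fun n => hnext n _⟩

theorem tendsto_prod_atTop_zero_of_le_of_symm {f : ℕ → ℕ → ℝ} {g : ℕ → ℝ}
    (hf0 : ∀ n m, 0 ≤ f n m) (hsymm : ∀ n m, f n m = f m n) (hfg : ∀ n m, n ≤ m → f n m ≤ g n)
    (hg : Tendsto g atTop (𝓝 0)) : Tendsto (fun q : ℕ × ℕ => f q.1 q.2) atTop (𝓝 0) := by
  have hmin : Tendsto (fun q : ℕ × ℕ => min q.1 q.2) atTop atTop :=
    tendsto_atTop_atTop.2 fun b => ⟨(b, b), fun q hq => le_min hq.1 hq.2⟩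
  refine tendsto_of_tendsto_of_tendsto_of_le_of_le tendsto_const_nhds (hg.comp hmin)
    (fun q => hf0 q.1 q.2) fun ⟨n, m⟩ => ?_
  rcases le_total n m with h | h
  · simpa [min_eq_left h] using hfg n m h
  · simpa [min_eq_right h, hsymm n m] using hfg m n h

section Caristi

variable {X : Type*} {p : X → X → ℝ} {φ : X → ℝ}

def CaristiLE (p : X → X → ℝ) (φ : X → ℝ) (a b : X) : Prop :=
  p a b ≤ φ a - φ b

namespace CaristiLE

variable {a b c : X}

theorem apply_le (hab : 0 ≤ p a b) (h : CaristiLE p φ a b) : φ b ≤ φ a := by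
  unfold CaristiLE at h
  linarith

theorem trans (hp0 : ∀ x, 0 ≤ p x x) (hp4 : ∀ x y z, p x z ≤ p x y + p y z - p y y)
    (hab : CaristiLE p φ a b) (hbc : CaristiLE p φ b c) : CaristiLE p φ a c := by
  unfold CaristiLE at *
  linarith [hp4 a b c, hp0 b]

theorem le_of_tendsto (hp0 : ∀ x, 0 ≤ p x x) (hp4 : ∀ x y z, p x z ≤ p x y + p y z - p y y)
    {u : ℕ → X} {z : X} {L : ℝ} (ha : ∀ᶠ n in atTop, CaristiLE p φ a (u n))
    (hu : Tendsto (fun n => p (u n) z) atTop (𝓝 0)) (hφu : Tendsto (φ ∘ u) atTop (𝓝 L)) :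
    p a z ≤ φ a - L := by
  have hlim : Tendsto (fun n => φ a - φ (u n) + p (u n) z) atTop (𝓝 (φ a - L + 0)) :=
    (tendsto_const_nhds.sub hφu).add hu
  refine (ge_of_tendsto hlim ?_).trans_eq (add_zero _)
  filter_upwards [ha] with n hn
  unfold CaristiLE at hn
  linarith [hp4 a (u n) z, hp0 (u n)]

end CaristiLE

theorem eq_of_self_eq_zero (hp0 : ∀ x, 0 ≤ p x x)
    (hp1 : ∀ x y, p x x = p x y → p y y = p x y → x = y) (hp2 : ∀ x y, p x y = p y x)
    (hp3 : ∀ x y, p x x ≤ p x y) {a b : X} (ha : p a a = 0) (hab : p a b = 0) : a = b := by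
  have hb : p b b = 0 := le_antisymm ((hp3 b a).trans_eq ((hp2 b a).trans hab)) (hp0 b)
  exact hp1 a b (ha.trans hab.symm) (hb.trans hab.symm)

theorem caristiLE_of_lt (hp0 : ∀ x, 0 ≤ p x x) (hp4 : ∀ x y z, p x z ≤ p x y + p y z - p y y)
    {x : ℕ → X} (hx : ∀ n, CaristiLE p φ (x n) (x (n + 1))) {n m : ℕ} (hnm : n < m) :
    CaristiLE p φ (x n) (x m) :=
  haveI : IsTrans X (CaristiLE p φ) := ⟨fun _ _ _ => CaristiLE.trans hp0 hp4⟩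
  Nat.rel_of_forall_rel_succ_of_lt _ hx hnm

theorem antitone_of_caristiLE_succ (hp0 : ∀ x y, 0 ≤ p x y) {x : ℕ → X}
    (hx : ∀ n, CaristiLE p φ (x n) (x (n + 1))) : Antitone (φ ∘ x) :=
  antitone_nat_of_succ_le fun n => show φ (x (n + 1)) ≤ φ (x n) from (hx n).apply_le (hp0 _ _)

theorem exists_seq_caristiLE_almost_minimal [Nonempty X] (hφ : BddBelow (Set.range φ))
    (hne : ∀ a, ∃ b, CaristiLE p φ a b) :
    ∃ x : ℕ → X, ∀ n, CaristiLE p φ (x n) (x (n + 1)) ∧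
      ∀ w, CaristiLE p φ (x n) w → φ (x (n + 1)) ≤ φ w + (1 / 2) ^ n :=
  exists_seq_forall_rel fun n a =>
    exists_forall_le_add_of_bddBelow (hne a) (hφ.mono (Set.image_subset_range _ _))
      (by positivity)

theorem tendsto_zero_of_caristiLE_chain (hp0 : ∀ x y, 0 ≤ p x y) (hp2 : ∀ x y, p x y = p y x)
    (hp3 : ∀ x y, p x x ≤ p x y) {x : ℕ → X} (hx : ∀ n m, n < m → CaristiLE p φ (x n) (x m))
    {L : ℝ} (hL : Tendsto (φ ∘ x) atTop (𝓝 L)) :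
    Tendsto (fun q : ℕ × ℕ => p (x q.1) (x q.2)) atTop (𝓝 0) := by
  have hanti := antitone_of_caristiLE_succ hp0 fun n => hx n (n + 1) n.lt_succ_self
  have hbound : ∀ n m, n < m → p (x n) (x m) ≤ φ (x n) - L := fun n m hnm => by
    have : L ≤ φ (x m) := hanti.le_of_tendsto hL m
    unfold CaristiLE at hx
    linarith [hx n m hnm]
  refine tendsto_prod_atTop_zero_of_le_of_symm (f := fun n m => p (x n) (x m))
    (fun n m => hp0 _ _) (fun n m => hp2 _ _) (fun n m hnm => ?_) (by simpa using hL.sub_const L)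
  rcases hnm.lt_or_eq with hlt | rfl
  · exact hbound n m hlt
  · exact (hp3 _ _).trans (hbound n (n + 1) n.lt_succ_self)

end Caristi

theorem stmt_14 {X : Type*}
    (p : X → X → ℝ)
    (hp0 : ∀ x y, 0 ≤ p x y)
    (hp1 : ∀ x y, p x x = p x y → p y y = p x y → x = y)
    (hp2 : ∀ x y, p x y = p y x)
    (hp3 : ∀ x y, p x x ≤ p x y)
    (hp4 : ∀ x y z, p x z ≤ p x y + p y z - p y y)
    (hcomplete : ∀ u : ℕ → X,
      (∃ L : ℝ, Tendsto (fun q : ℕ × ℕ => p (u q.1) (u q.2)) atTop (𝓝 L)) →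
      ∃ z : X, Tendsto (fun n => p (u n) z) atTop (𝓝 (p z z)) ∧
        Tendsto (fun q : ℕ × ℕ => p (u q.1) (u q.2)) atTop (𝓝 (p z z)))
    (φ : X → ℝ) (hφ0 : ∀ x, 0 ≤ φ x)
    (hlsc : ∀ (u : ℕ → X) (x : X),
      Tendsto (fun n => p (u n) x) atTop (𝓝 (p x x)) →
      Tendsto (fun n => p (u n) (u n)) atTop (𝓝 (p x x)) →
      φ x ≤ Filter.liminf (fun n => φ (u n)) atTop)
    (T : X → X)
    (hT : ∀ x, p x (T x) ≤ φ x - φ (T x))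
    (hX0 : ∃ x : X, p x x = 0) :
    ∃ z : X, T z = z := by
  obtain ⟨x0, -⟩ := hX0
  have : Nonempty X := ⟨x0⟩
  have hφ : BddBelow (Set.range φ) := ⟨0, Set.forall_mem_range.2 hφ0⟩
  obtain ⟨x, hx⟩ := exists_seq_caristiLE_almost_minimal hφ fun a => ⟨T a, hT a⟩
  have hchain n m (hnm : n < m) : CaristiLE p φ (x n) (x m) :=
    caristiLE_of_lt (fun y => hp0 y y) hp4 (fun n => (hx n).1) hnm
  have hanti := antitone_of_caristiLE_succ hp0 fun n => (hx n).1
  obtain ⟨L, hφx⟩ : ∃ L, Tendsto (φ ∘ x) atTop (𝓝 L) :=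
    ⟨_, tendsto_atTop_ciInf hanti (hφ.mono (Set.range_comp_subset_range x φ))⟩
  have hcauchy := tendsto_zero_of_caristiLE_chain hp0 hp2 hp3 hchain hφx
  obtain ⟨z, hxz, hxx⟩ := hcomplete x ⟨0, hcauchy⟩
  have hz : p z z = 0 := tendsto_nhds_unique hxx hcauchy
  have hφz : φ z ≤ L :=
    (hlsc x z hxz (hxx.comp tendsto_atTop_diagonal)).trans_eq hφx.liminf_eq
  rw [hz] at hxz
  have hxz_le n : CaristiLE p φ (x n) z :=
    (CaristiLE.le_of_tendsto (fun y => hp0 y y) hp4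
      ((eventually_gt_atTop n).mono fun m => hchain n m) hxz hφx).trans (by linarith)
  have hxTz n : CaristiLE p φ (x n) (T z) := (hxz_le n).trans (fun y => hp0 y y) hp4 (hT z)
  have hLTz : L ≤ φ (T z) + 0 :=
    le_of_tendsto_of_tendsto' (hφx.comp (tendsto_add_atTop_nat 1))
      (tendsto_const_nhds.add (tendsto_pow_atTop_nhds_zero_of_lt_one (by norm_num) (by norm_num)))
      fun n => (hx n).2 _ (hxTz n)
  have hzTz : p z (T z) = 0 := le_antisymm (by linarith [hT z]) (hp0 _ _)
  exact ⟨z, (eq_of_self_eq_zero (fun y => hp0 y y) hp1 hp2 hp3 hz hzTz).symm⟩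
end

section
/- (Weakened Caristi–Kirk in partial metric spaces) Let (X,p) be a complete partial metric space, φ : X → [0,∞) lower semicontinuous, and T : X → X satisfy p(x,Tx) ≤ p(x,x) + φ(x) − φ(Tx) for all x ∈ X. Then T has a fixed point. -/
/-!
The metric `d(x, y) = 2 p(x, y) - p(x, x) - p(y, y)` induced by `p` is complete, and
`d`-convergence implies convergence in `τ_p`, so `φ` stays lower semicontinuous for `d`. Since
`x ↦ p(x, x)` is `1`-Lipschitz for `d`, the hypothesis on `T` becomes Caristi's condition
`d(x, Tx) ≤ ψ x - ψ (Tx)` for the lower semicontinuous `ψ = p(x, x) + 2 φ`.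

Caristi's theorem is proved in Brøndsted's way: the sets `S x = {y | d(x, y) ≤ ψ x - ψ y}` are
closed and satisfy `y ∈ S x → S y ⊆ S x`. Picking `u (n + 1) ∈ S (u n)` with `ψ` within `1/(n+1)`
of its infimum on `S (u n)` confines `S (u (n + 1))` to a ball of radius `1/(n+1)`, so `u` is
Cauchy and its limit `z` lies in every `S (u n)`; so does `T z ∈ S z`, whence `T z = z`.
-/

open Filter Topology Set Function

section Caristi

variable {X : Type*} [MetricSpace X] {ψ : X → ℝ}

/-- `y ∈ caristiSet ψ x` is the Brøndsted order `x ≼ y`. -/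
def caristiSet (ψ : X → ℝ) (x : X) : Set X := {y | dist x y ≤ ψ x - ψ y}

lemma self_mem_caristiSet (x : X) : x ∈ caristiSet ψ x := by
  simp [caristiSet]

lemma caristiSet_trans {x y z : X} (hy : y ∈ caristiSet ψ x) (hz : z ∈ caristiSet ψ y) :
    z ∈ caristiSet ψ x := by
  simp only [caristiSet, mem_ofPred_eq] at *
  linarith [dist_triangle x y z]

lemma isClosed_caristiSet (hψ : LowerSemicontinuous ψ) (x : X) : IsClosed (caristiSet ψ x) := by
  have hset : caristiSet ψ x = (fun y => dist x y + ψ y) ⁻¹' Iic (ψ x) := by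
    ext y
    simp only [caristiSet, mem_ofPred_eq, mem_preimage, mem_Iic]
    constructor <;> intro <;> linarith
  rw [hset]
  exact ((continuous_const.dist continuous_id).lowerSemicontinuous.add hψ).isClosed_preimage _

lemma exists_mem_caristiSet_forall_dist_le (hψ : BddBelow (range ψ)) (x : X) {ε : ℝ}
    (hε : 0 < ε) : ∃ y ∈ caristiSet ψ x, ∀ w ∈ caristiSet ψ y, dist y w ≤ ε := by
  have hbdd : BddBelow (ψ '' caristiSet ψ x) := hψ.mono (image_subset_range _ _)
  obtain ⟨_, ⟨y, hy, rfl⟩, hyε⟩ := exists_lt_of_csInf_lt (s := ψ '' caristiSet ψ x)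
    ⟨ψ x, x, self_mem_caristiSet x, rfl⟩ (lt_add_of_pos_right _ hε)
  refine ⟨y, hy, fun w hw => ?_⟩
  have hinf : sInf (ψ '' caristiSet ψ x) ≤ ψ w :=
    csInf_le hbdd ⟨w, caristiSet_trans hy hw, rfl⟩
  have hyw : dist y w ≤ ψ y - ψ w := hw
  linarith

/-- Caristi's fixed point theorem. -/
theorem exists_isFixedPt_of_dist_le_sub [CompleteSpace X] [Nonempty X]
    (hψ : LowerSemicontinuous ψ) (hψb : BddBelow (range ψ)) {T : X → X}
    (hT : ∀ x, dist x (T x) ≤ ψ x - ψ (T x)) : ∃ z, IsFixedPt T z := by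
  choose next hnext hsmall using fun x (n : ℕ) =>
    exists_mem_caristiSet_forall_dist_le hψb x (Nat.one_div_pos_of_nat (n := n))
  obtain ⟨x₀⟩ := ‹Nonempty X›
  let v : ℕ → X := fun n => Nat.rec (next x₀ 0) (fun n y => next y (n + 1)) n
  have hv_small : ∀ n, ∀ w ∈ caristiSet ψ (v n), dist (v n) w ≤ 1 / (n + 1) := by
    rintro (_ | n) <;> exact_mod_cast hsmall _ _
  have hv_mono : ∀ n m, n ≤ m → v m ∈ caristiSet ψ (v n) := by
    intro n m hnm
    induction m, hnm using Nat.le_induction with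
    | base => exact self_mem_caristiSet _
    | succ m _ ih => exact caristiSet_trans ih (hnext _ _)
  obtain ⟨z, hz⟩ := cauchySeq_tendsto_of_complete <| cauchySeq_of_le_tendsto_0' _
    (fun n m hnm => hv_small n _ (hv_mono n m hnm)) tendsto_one_div_add_atTop_nhds_zero_nat
  have hz_mem : ∀ n, z ∈ caristiSet ψ (v n) := fun n =>
    (isClosed_caristiSet hψ _).mem_of_tendsto hz (eventually_atTop.2 ⟨n, hv_mono n⟩)
  have hdist : ∀ n : ℕ, dist z (T z) ≤ 1 / (n + 1) + 1 / (n + 1) := fun n =>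
    (dist_triangle_left _ _ (v n)).trans <|
      add_le_add (hv_small n _ (hz_mem n)) (hv_small n _ (caristiSet_trans (hz_mem n) (hT z)))
  have hlim := tendsto_one_div_add_atTop_nhds_zero_nat.add
    (tendsto_one_div_add_atTop_nhds_zero_nat (𝕜 := ℝ))
  rw [add_zero] at hlim
  exact ⟨z, (dist_le_zero.1 (ge_of_tendsto' hlim hdist)).symm⟩

end Caristi

lemma lowerSemicontinuous_of_forall_le_liminf {X : Type*} [TopologicalSpace X]
    [SequentialSpace X] {f : X → ℝ} (hf : BddBelow (range f))
    (h : ∀ (u : ℕ → X) (x : X), Tendsto u atTop (𝓝 x) → f x ≤ liminf (fun n => f (u n)) atTop) :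
    LowerSemicontinuous f := by
  refine lowerSemicontinuous_iff_isClosed_preimage.2 fun y => IsSeqClosed.isClosed ?_
  intro u x hu hux
  obtain ⟨c, hc⟩ := hf
  refine (h u x hux).trans (liminf_le_of_le (isBoundedUnder_of ⟨c, fun n => hc ⟨u n, rfl⟩⟩)
    fun b hb => ?_)
  obtain ⟨n, hn⟩ := hb.exists
  exact hn.trans (hu n)

/-- A partial metric in the sense of Matthews, without the nonnegativity axiom. -/
structure IsPartialMetric {X : Type*} (p : X → X → ℝ) : Prop where
  eq_of_self_eq : ∀ x y, p x x = p x y → p y y = p x y → x = y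
  symm : ∀ x y, p x y = p y x
  self_le : ∀ x y, p x x ≤ p x y
  triangle : ∀ x y z, p x z ≤ p x y + p y z - p y y

namespace IsPartialMetric

variable {X : Type*} {p : X → X → ℝ}

abbrev toMetricSpace (hp : IsPartialMetric p) : MetricSpace X where
  dist x y := 2 * p x y - p x x - p y y
  dist_self x := by ring
  dist_comm x y := by rw [hp.symm x y]; ring
  dist_triangle x y z := by linarith [hp.triangle x y z]
  eq_of_dist_eq_zero {x y} h := by
    have := hp.self_le x y
    have := hp.self_le y x
    have := hp.symm x y
    exact hp.eq_of_self_eq x y (by linarith) (by linarith)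

section InducedMetric

variable [MetricSpace X] (hp : IsPartialMetric p)
  (hd : ∀ x y, dist x y = 2 * p x y - p x x - p y y)
include hp hd

lemma sub_self_le_dist (x y : X) : p x y - p y y ≤ dist x y := by
  rw [hd]
  linarith [hp.self_le x y]

lemma lipschitzWith_self : LipschitzWith 1 fun x => p x x :=
  LipschitzWith.of_le_add fun x y => by
    rw [hd]
    linarith [hp.self_le x y]

lemma tendsto_self_of_tendsto {u : ℕ → X} {x : X} (hu : Tendsto u atTop (𝓝 x)) :
    Tendsto (fun n => p (u n) x) atTop (𝓝 (p x x)) := by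
  rw [← tendsto_sub_nhds_zero_iff]
  refine squeeze_zero (fun n => ?_) (fun n => hp.sub_self_le_dist hd (u n) x)
    (tendsto_iff_dist_tendsto_zero.1 hu)
  linarith [hp.self_le x (u n), hp.symm x (u n)]

lemma completeSpace (hcomplete : ∀ u : ℕ → X,
      (∃ L : ℝ, Tendsto (fun q : ℕ × ℕ => p (u q.1) (u q.2)) atTop (𝓝 L)) →
      ∃ z : X, Tendsto (fun n => p (u n) z) atTop (𝓝 (p z z)) ∧
        Tendsto (fun q : ℕ × ℕ => p (u q.1) (u q.2)) atTop (𝓝 (p z z))) :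
    CompleteSpace X := by
  refine Metric.complete_of_cauchySeq_tendsto fun u hu => ?_
  obtain ⟨L, hL⟩ := cauchySeq_tendsto_of_complete
    ((hp.lipschitzWith_self hd).uniformContinuous.comp_cauchySeq hu)
  have hfst : Tendsto (Prod.fst : ℕ × ℕ → ℕ) atTop atTop := by
    rw [← prod_atTop_atTop_eq]; exact tendsto_fst
  have hsnd : Tendsto (Prod.snd : ℕ × ℕ → ℕ) atTop atTop := by
    rw [← prod_atTop_atTop_eq]; exact tendsto_snd
  have hpair : Tendsto (fun q : ℕ × ℕ => p (u q.1) (u q.2)) atTop (𝓝 L) := by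
    have := ((cauchySeq_iff_tendsto_dist_atTop_0.1 hu).add
      ((hL.comp hfst).add (hL.comp hsnd))).div_const 2
    convert this using 2 with q
    · simp only [comp_apply, hd]; ring
    · ring
  obtain ⟨z, hz, hzpair⟩ := hcomplete u ⟨L, hpair⟩
  obtain rfl : L = p z z := tendsto_nhds_unique hpair hzpair
  refine ⟨z, tendsto_iff_dist_tendsto_zero.2 ?_⟩
  have := ((hz.const_mul 2).sub hL).sub_const (p z z)
  convert this using 2 with n
  · exact hd _ _
  · ring

end InducedMetric

end IsPartialMetric

theorem stmt_15 {X : Type*} [Nonempty X]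
    (p : X → X → ℝ)
    (hp0 : ∀ x y, 0 ≤ p x y)
    (hp1 : ∀ x y, p x x = p x y → p y y = p x y → x = y)
    (hp2 : ∀ x y, p x y = p y x)
    (hp3 : ∀ x y, p x x ≤ p x y)
    (hp4 : ∀ x y z, p x z ≤ p x y + p y z - p y y)
    (hcomplete : ∀ u : ℕ → X,
      (∃ L : ℝ, Tendsto (fun q : ℕ × ℕ => p (u q.1) (u q.2)) atTop (𝓝 L)) →
      ∃ z : X, Tendsto (fun n => p (u n) z) atTop (𝓝 (p z z)) ∧
        Tendsto (fun q : ℕ × ℕ => p (u q.1) (u q.2)) atTop (𝓝 (p z z)))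
    (φ : X → ℝ) (hφ0 : ∀ x, 0 ≤ φ x)
    (hlsc : ∀ (u : ℕ → X) (x : X),
      Tendsto (fun n => p (u n) x) atTop (𝓝 (p x x)) →
      φ x ≤ Filter.liminf (fun n => φ (u n)) atTop)
    (T : X → X)
    (hT : ∀ x, p x (T x) ≤ p x x + φ x - φ (T x)) :
    ∃ z : X, T z = z := by
  have hp : IsPartialMetric p := ⟨hp1, hp2, hp3, hp4⟩
  let := hp.toMetricSpace
  have hd : ∀ x y, dist x y = 2 * p x y - p x x - p y y := fun _ _ => rfl
  have := hp.completeSpace hd hcomplete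
  have hφ : LowerSemicontinuous φ := lowerSemicontinuous_of_forall_le_liminf
    ⟨0, by rintro _ ⟨x, rfl⟩; exact hφ0 x⟩ fun u x hu => hlsc u x (hp.tendsto_self_of_tendsto hd hu)
  have hψ : LowerSemicontinuous fun x => p x x + 2 * φ x :=
    (hp.lipschitzWith_self hd).continuous.lowerSemicontinuous.add
      ((continuous_const_mul 2).comp_lowerSemicontinuous hφ fun _ _ h => by linarith)
  refine exists_isFixedPt_of_dist_le_sub hψ ⟨0, ?_⟩ fun x => ?_
  · rintro _ ⟨x, rfl⟩
    linarith [hp0 x x, hφ0 x]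
  · rw [hd]
    linarith [hT x]
end

section
/- (Ekeland-type variational principle in partial metric spaces) Let (X,p) be a complete partial metric space and φ : X → [0,∞) weakly (symmetrically) lower semicontinuous. Then there exists z ∈ X such that φ(z) < φ(x) + p(z,x) − p(z,z) for all x ∈ X with x ≠ z. -/
/-!
Ekeland's argument. For `y` in the drop set `S x = {y | φ y + p x y - p x x ≤ φ x}` both `φ` and
`φ + p(·,·)` decrease, and `S` is transitive by the triangle inequality. Build a chain
`u (n+1) ∈ S (u n)` that almost minimizes `2φ + p(·,·)` over `S (u n)`. Along it `φ (u n) → c` and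
`p (u n) (u n) → L`, and `p (u n) (u m) → L` is squeezed between `p (u m) (u m)` and
`p (u n) (u n) + φ (u n) - φ (u m)`, so the chain is Cauchy with a limit `z ∈ ⋂ S (u n)`.
Every `x ∈ ⋂ S (u n)` has `φ x ≤ c`, `φ x + p x x ≤ c + L` and, by almost minimality,
`2 φ x + p x x ≥ 2c + L`; as `2φ + p(·,·)` is the sum of the first two, `φ x = c` and
`p x x = L`. If `x ∈ S z` this forces `p z x = p z z = p x x`, so `x = z`.
-/

open Filter Topology

theorem exists_chain_forall_lt_add {X : Type*} [Nonempty X] (S : X → Set X)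
    (hS : ∀ x, (S x).Nonempty) (f : X → ℝ) (hf : BddBelow (Set.range f)) (ε : ℕ → ℝ)
    (hε : ∀ n, 0 < ε n) :
    ∃ u : ℕ → X, (∀ n, u (n + 1) ∈ S (u n)) ∧ ∀ n, ∀ y ∈ S (u n), f (u (n + 1)) < f y + ε n := by
  have step : ∀ x n, ∃ y ∈ S x, ∀ y' ∈ S x, f y < f y' + ε n := by
    intro x n
    obtain ⟨_, ⟨y, hy, rfl⟩, hlt⟩ :=
      exists_lt_of_csInf_lt ((hS x).image f) (lt_add_of_pos_right (sInf (f '' S x)) (hε n))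
    refine ⟨y, hy, fun y' hy' => hlt.trans_le ?_⟩
    gcongr
    exact csInf_le (hf.mono (Set.image_subset_range f _)) ⟨y', hy', rfl⟩
  choose g hgS hg using step
  obtain ⟨x₀⟩ := ‹Nonempty X›
  let u : ℕ → X := fun n => Nat.rec x₀ (fun k x => g x k) n
  exact ⟨u, fun n => hgS (u n) n, fun n => hg (u n) n⟩

section Ekeland

variable {X : Type*} {p : X → X → ℝ} {φ : X → ℝ}

variable (p φ) in
def ekelandSet (x : X) : Set X :=
  {y | φ y + p x y - p x x ≤ φ x}

theorem mem_ekelandSet {x y : X} : y ∈ ekelandSet p φ x ↔ φ y + p x y - p x x ≤ φ x :=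
  Iff.rfl

theorem self_mem_ekelandSet (x : X) : x ∈ ekelandSet p φ x := by
  simp [mem_ekelandSet]

theorem ekelandSet_subset (hp4 : ∀ x y z, p x z ≤ p x y + p y z - p y y) {x y : X}
    (hy : y ∈ ekelandSet p φ x) : ekelandSet p φ y ⊆ ekelandSet p φ x := fun w hw => by
  rw [mem_ekelandSet] at hy hw ⊢
  linarith [hp4 x y w]

theorem le_of_mem_ekelandSet (hp3 : ∀ x y, p x x ≤ p x y) {x y : X}
    (hy : y ∈ ekelandSet p φ x) : φ y ≤ φ x := by
  rw [mem_ekelandSet] at hy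
  linarith [hp3 x y]

theorem add_self_le_of_mem_ekelandSet (hp2 : ∀ x y, p x y = p y x)
    (hp3 : ∀ x y, p x x ≤ p x y) {x y : X} (hy : y ∈ ekelandSet p φ x) :
    φ y + p y y ≤ φ x + p x x := by
  rw [mem_ekelandSet] at hy
  linarith [hp3 y x, hp2 y x]

theorem eq_of_mem_ekelandSet (hp1 : ∀ x y, p x x = p x y → p y y = p x y → x = y)
    (hp3 : ∀ x y, p x x ≤ p x y) {x z : X} (hx : x ∈ ekelandSet p φ z) (hφ : φ x = φ z)
    (hpx : p x x = p z z) : x = z := by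
  rw [mem_ekelandSet] at hx
  have hzx : p z x = p z z := le_antisymm (by linarith) (hp3 z x)
  exact (hp1 z x hzx.symm (hpx.trans hzx.symm)).symm

theorem mem_ekelandSet_of_le (hp4 : ∀ x y z, p x z ≤ p x y + p y z - p y y) {u : ℕ → X}
    (hu : ∀ n, u (n + 1) ∈ ekelandSet p φ (u n)) {n m : ℕ} (hnm : n ≤ m) :
    u m ∈ ekelandSet p φ (u n) := by
  induction m, hnm using Nat.le_induction with
  | base => exact self_mem_ekelandSet _
  | succ m _ ih => exact ekelandSet_subset hp4 ih (hu m)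

theorem exists_tendsto_of_chain (hp0 : ∀ x y, 0 ≤ p x y) (hp2 : ∀ x y, p x y = p y x)
    (hp3 : ∀ x y, p x x ≤ p x y) (hφ0 : ∀ x, 0 ≤ φ x) {u : ℕ → X}
    (hu : ∀ n, u (n + 1) ∈ ekelandSet p φ (u n)) :
    ∃ c L, Tendsto (fun n => φ (u n)) atTop (𝓝 c) ∧
      Tendsto (fun n => p (u n) (u n)) atTop (𝓝 L) := by
  have hc := tendsto_atTop_ciInf (f := fun n => φ (u n))
    (antitone_nat_of_succ_le fun n => le_of_mem_ekelandSet hp3 (hu n))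
    ⟨0, by rintro _ ⟨n, rfl⟩; exact hφ0 _⟩
  have hC := tendsto_atTop_ciInf (f := fun n => φ (u n) + p (u n) (u n))
    (antitone_nat_of_succ_le fun n => add_self_le_of_mem_ekelandSet hp2 hp3 (hu n))
    ⟨0, by rintro _ ⟨n, rfl⟩; linarith [hφ0 (u n), hp0 (u n) (u n)]⟩
  exact ⟨_, _, hc, by simpa using hC.sub hc⟩

theorem tendsto_pair_of_chain (hp2 : ∀ x y, p x y = p y x) (hp3 : ∀ x y, p x x ≤ p x y)
    (hp4 : ∀ x y z, p x z ≤ p x y + p y z - p y y) {u : ℕ → X}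
    (hu : ∀ n, u (n + 1) ∈ ekelandSet p φ (u n)) {c L : ℝ}
    (hc : Tendsto (fun n => φ (u n)) atTop (𝓝 c))
    (hL : Tendsto (fun n => p (u n) (u n)) atTop (𝓝 L)) :
    Tendsto (fun q : ℕ × ℕ => p (u q.1) (u q.2)) atTop (𝓝 L) := by
  have bounds : ∀ n m, n ≤ m →
      p (u m) (u m) ≤ p (u n) (u m) ∧ p (u n) (u m) ≤ p (u n) (u n) + (φ (u n) - φ (u m)) := by
    intro n m hnm
    have h := mem_ekelandSet.1 (mem_ekelandSet_of_le hp4 hu hnm)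
    exact ⟨(hp3 _ _).trans_eq (hp2 _ _), by linarith⟩
  have sandwich : ∀ q : ℕ × ℕ, p (u (max q.1 q.2)) (u (max q.1 q.2)) ≤ p (u q.1) (u q.2) ∧
      p (u q.1) (u q.2) ≤ p (u (min q.1 q.2)) (u (min q.1 q.2)) +
        (φ (u (min q.1 q.2)) - φ (u (max q.1 q.2))) := by
    rintro ⟨n, m⟩
    rcases le_total n m with h | h
    · simpa [h] using bounds n m h
    · simpa [h, hp2 (u n) (u m)] using bounds m n h
  have hmin : Tendsto (fun q : ℕ × ℕ => min q.1 q.2) atTop atTop :=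
    tendsto_atTop_atTop.2 fun b => ⟨(b, b), fun q hq => le_min hq.1 hq.2⟩
  have hmax : Tendsto (fun q : ℕ × ℕ => max q.1 q.2) atTop atTop :=
    tendsto_atTop_atTop.2 fun b => ⟨(b, b), fun q hq => hq.1.trans (le_max_left _ _)⟩
  have upper := (hL.comp hmin).add ((hc.comp hmin).sub (hc.comp hmax))
  rw [sub_self, add_zero] at upper
  exact tendsto_of_tendsto_of_tendsto_of_le_of_le (hL.comp hmax) upper
    (fun q => (sandwich q).1) (fun q => (sandwich q).2)

theorem forall_mem_ekelandSet_of_tendsto (hp4 : ∀ x y z, p x z ≤ p x y + p y z - p y y)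
    {u : ℕ → X} (hu : ∀ n, u (n + 1) ∈ ekelandSet p φ (u n)) {c L : ℝ}
    (hc : Tendsto (fun n => φ (u n)) atTop (𝓝 c))
    (hL : Tendsto (fun n => p (u n) (u n)) atTop (𝓝 L)) {z : X}
    (hz : Tendsto (fun n => p (u n) z) atTop (𝓝 L)) (hφz : φ z ≤ c) (n : ℕ) :
    z ∈ ekelandSet p φ (u n) := by
  have hlim : Tendsto (fun m => p (u n) (u n) + φ (u n) - φ (u m) + p (u m) z - p (u m) (u m))
      atTop (𝓝 (p (u n) (u n) + φ (u n) - c + L - L)) :=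
    ((tendsto_const_nhds.sub hc).add hz).sub hL
  have hle : p (u n) z ≤ p (u n) (u n) + φ (u n) - c + L - L := by
    refine ge_of_tendsto hlim ((eventually_ge_atTop n).mono fun m hm => ?_)
    have h := mem_ekelandSet.1 (mem_ekelandSet_of_le hp4 hu hm)
    linarith [hp4 (u n) (u m) z]
  rw [mem_ekelandSet]
  linarith

theorem eq_of_forall_mem_ekelandSet (hp2 : ∀ x y, p x y = p y x) (hp3 : ∀ x y, p x x ≤ p x y)
    {u : ℕ → X} {ε : ℕ → ℝ}
    (hmin : ∀ n, ∀ y ∈ ekelandSet p φ (u n),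
      2 * φ (u (n + 1)) + p (u (n + 1)) (u (n + 1)) < 2 * φ y + p y y + ε n)
    (hε : Tendsto ε atTop (𝓝 0)) {c L : ℝ} (hc : Tendsto (fun n => φ (u n)) atTop (𝓝 c))
    (hL : Tendsto (fun n => p (u n) (u n)) atTop (𝓝 L)) ⦃x : X⦄
    (hx : ∀ n, x ∈ ekelandSet p φ (u n)) : φ x = c ∧ p x x = L := by
  have hφx : φ x ≤ c := ge_of_tendsto hc (.of_forall fun n => le_of_mem_ekelandSet hp3 (hx n))
  have hψx : φ x + p x x ≤ c + L :=
    ge_of_tendsto (hc.add hL) (.of_forall fun n => add_self_le_of_mem_ekelandSet hp2 hp3 (hx n))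
  have hχx : 2 * c + L - 0 ≤ 2 * φ x + p x x := by
    have hshift := ((hc.const_mul 2).add hL).comp (tendsto_add_atTop_nat 1)
    exact le_of_tendsto (hshift.sub hε) (.of_forall fun n => by
      have := hmin n x (hx n)
      simp only [Function.comp_apply]
      linarith)
  constructor <;> linarith

end Ekeland

theorem stmt_18 {X : Type*} [Nonempty X]
    (p : X → X → ℝ)
    (hp0 : ∀ x y, 0 ≤ p x y)
    (hp1 : ∀ x y, p x x = p x y → p y y = p x y → x = y)
    (hp2 : ∀ x y, p x y = p y x)
    (hp3 : ∀ x y, p x x ≤ p x y)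
    (hp4 : ∀ x y z, p x z ≤ p x y + p y z - p y y)
    (hcomplete : ∀ u : ℕ → X,
      (∃ L : ℝ, Tendsto (fun q : ℕ × ℕ => p (u q.1) (u q.2)) atTop (𝓝 L)) →
      ∃ z : X, Tendsto (fun n => p (u n) z) atTop (𝓝 (p z z)) ∧
        Tendsto (fun q : ℕ × ℕ => p (u q.1) (u q.2)) atTop (𝓝 (p z z)))
    (φ : X → ℝ) (hφ0 : ∀ x, 0 ≤ φ x)
    (hlsc : ∀ (u : ℕ → X) (x : X),
      Tendsto (fun n => p (u n) x) atTop (𝓝 (p x x)) →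
      Tendsto (fun n => p (u n) (u n)) atTop (𝓝 (p x x)) →
      φ x ≤ Filter.liminf (fun n => φ (u n)) atTop) :
    ∃ z : X, ∀ x : X, x ≠ z → φ z < φ x + p z x - p z z := by
  obtain ⟨u, hu, hmin⟩ := exists_chain_forall_lt_add (ekelandSet p φ)
    (fun x => ⟨x, self_mem_ekelandSet x⟩) (fun x => 2 * φ x + p x x)
    ⟨0, by rintro _ ⟨x, rfl⟩; linarith [hφ0 x, hp0 x x]⟩
    (fun n => 1 / ((n : ℝ) + 1)) fun n => Nat.one_div_pos_of_nat
  obtain ⟨c, L, hc, hL⟩ := exists_tendsto_of_chain hp0 hp2 hp3 hφ0 hu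
  have hpair := tendsto_pair_of_chain hp2 hp3 hp4 hu hc hL
  obtain ⟨z, hzu, hzpair⟩ := hcomplete u ⟨L, hpair⟩
  have hzL : p z z = L := tendsto_nhds_unique hzpair hpair
  have hφz : φ z ≤ c := by
    simpa only [hc.liminf_eq] using hlsc u z hzu (hzL ▸ hL)
  have hzS := forall_mem_ekelandSet_of_tendsto hp4 hu hc hL (hzL ▸ hzu) hφz
  have hlimit := eq_of_forall_mem_ekelandSet hp2 hp3 hmin tendsto_one_div_add_atTop_nhds_zero_nat
    hc hL
  refine ⟨z, fun x hxz => ?_⟩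
  by_contra! hxS
  have hx := hlimit fun n => ekelandSet_subset hp4 (hzS n) hxS
  exact hxz (eq_of_mem_ekelandSet hp1 hp3 hxS (hx.1.trans (hlimit hzS).1.symm)
    (hx.2.trans hzL.symm))
end
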